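/- The final size of susceptibles always lies strictly below the herd immunity threshold: if R > 1, S₀ > 0, I₀ > 0, and s solves s = S₀·exp(-R·(S₀ + I₀ - s)) with 0 < s ≤ 1/R, then s < 1/R (strictly) unless I₀ = 0. -/

import Mathlib

/-! At `s = 1/R` the final-size relation would read `1 = (R S₀) e^{1 - R S₀} · e^{-R I₀}`.
The first factor is at most `1` because `x ≤ e^{x - 1}`, and the second is `< 1` as soon as
`R I₀ > 0`, so the threshold itself is never a solution. -/

open Real

theorem mul_exp_one_sub_le_one (x : ℝ) : x * exp (1 - x) ≤ 1 := by
  have hx : x ≤ exp (x - 1) := by linarith [add_one_le_exp (x - 1)]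
  calc x * exp (1 - x) ≤ exp (x - 1) * exp (1 - x) := by gcongr
    _ = 1 := by rw [← exp_add]; simp

theorem final_size_map_lt_threshold {R S₀ I₀ : ℝ} (hR : 0 < R) (hI₀ : 0 < I₀) :
    S₀ * exp (-R * (S₀ + I₀ - 1 / R)) < 1 / R := by
  have hsplit : -R * (S₀ + I₀ - 1 / R) = (1 - R * S₀) + -(R * I₀) := by
    field_simp; ring
  have hdamp : exp (-(R * I₀)) < 1 := exp_lt_one_iff.mpr (by linarith [mul_pos hR hI₀])
  rw [lt_div_iff₀ hR, hsplit, exp_add]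
  calc S₀ * (exp (1 - R * S₀) * exp (-(R * I₀))) * R
        = R * S₀ * exp (1 - R * S₀) * exp (-(R * I₀)) := by ring
    _ ≤ 1 * exp (-(R * I₀)) := by gcongr; exact mul_exp_one_sub_le_one _
    _ < 1 := by rwa [one_mul]

theorem final_size_below_herd_immunity_general (R S₀ I₀ s : ℝ) (hR : 1 < R)
    (hI₀ : I₀ ∈ Set.Ioc (0:ℝ) 1)
    (hs : s ∈ Set.Ioc 0 (1 / R))
    (heq : s = S₀ * Real.exp (-R * (S₀ + I₀ - s))) :
    s < 1 / R := by
  refine lt_of_le_of_ne hs.2 fun hthreshold => ?_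
  rw [hthreshold] at heq
  exact (final_size_map_lt_threshold (by linarith) hI₀.1).ne' heq

theorem final_size_below_herd_immunity (R S₀ I₀ s : ℝ) (hR : 1 < R)
    (hS₀ : S₀ ∈ Set.Ioc (0:ℝ) 1) (hI₀ : I₀ ∈ Set.Ioc (0:ℝ) 1)
    (hs : s ∈ Set.Ioc 0 (1 / R))
    (heq : s = S₀ * Real.exp (-R * (S₀ + I₀ - s))) :
    s < 1 / R :=
  final_size_below_herd_immunity_general R S₀ I₀ s hR hI₀ hs heq
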